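/- Let n = 2m be even, let W be a ℂ-vector space, and work in the exterior algebra Λ(W ⊕ ℂⁿ) with generators η_i := ι(0,e_i). Let ω be an n×n skew-symmetric matrix whose entries ω_{ij} are even elements of the subalgebra Λ(W) (i.e., sums of elements of even exterior degree in W). Then exp((1/2) Σ_{i,j=1}^n ω_{ij} η_i η_j) = Σ_I Pf(ω_I) η^I, where the sum runs over all subsets I of {1,…,n} of even cardinality, ω_I is the submatrix of ω with rows and columns indexed by I, and Pf(ω_I) ∈ Λ(W) is given by the combinatorial Pfaffian formula (which is well defined since the even entries ω_{ij} commute with one another). -/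

import Mathlib

open scoped BigOperators
open Matrix

/-- The combinatorial Pfaffian of an `n × n` matrix (intended for even `n = 2k`) with
entries in a (possibly noncommutative) `ℂ`-algebra; the combinatorial formula
`Pf(A) = (1/(2^k k!)) Σ_{σ ∈ S_{2k}} sgn(σ) Π_{l=1}^{k} A_{σ(2l-1), σ(2l)}`
is well defined for matrices whose entries pairwise commute (ordered products are
taken as list products). -/
noncomputable def pfaffian {A : Type*} [Ring A] [Algebra ℂ A] {n : ℕ}
    (M : Matrix (Fin n) (Fin n) A) : A :=
  ((2 ^ (n / 2) * (Nat.factorial (n / 2)) : ℂ))⁻¹ •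
    ∑ σ : Equiv.Perm (Fin n),
      ((Equiv.Perm.sign σ : ℤ) : ℂ) •
        ((List.finRange (n / 2)).map fun l =>
          M (σ ⟨2 * l.val, by have := l.isLt; omega⟩)
            (σ ⟨2 * l.val + 1, by have := l.isLt; omega⟩)).prod

variable (W : Type*) [AddCommGroup W] [Module ℂ W]

/-- The even part of the exterior algebra `Λ(W)`: the sum of the exterior powers of
even degree, the `i`-th graded piece being `(range ι)^i`. -/
noncomputable def evenPart : Submodule ℂ (ExteriorAlgebra ℂ W) :=
  ⨆ i : ℕ, (LinearMap.range (ExteriorAlgebra.ι ℂ (M := W))) ^ (2 * i)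

variable (n : ℕ)

/-- The inclusion `Λ(W) → Λ(W ⊕ ℂⁿ)` induced by `W → W ⊕ ℂⁿ`. -/
noncomputable def inclW : ExteriorAlgebra ℂ W →ₐ[ℂ] ExteriorAlgebra ℂ (W × (Fin n → ℂ)) :=
  ExteriorAlgebra.map (LinearMap.inl ℂ W (Fin n → ℂ))

/-- The generators `η i = ι(0, e i)` of `Λ(W ⊕ ℂⁿ)` coming from the `ℂⁿ` factor. -/
noncomputable def etaGen (i : Fin n) : ExteriorAlgebra ℂ (W × (Fin n → ℂ)) :=
  ExteriorAlgebra.ι ℂ ((0 : W), Pi.single i (1 : ℂ))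

/-- For `I = {i₁ < … < i_k} ⊆ {1,…,n}`, the monomial `η^I = η_{i₁} ⋯ η_{i_k}`. -/
noncomputable def etaMonomial (I : Finset (Fin n)) :
    ExteriorAlgebra ℂ (W × (Fin n → ℂ)) :=
  ((I.sort (· ≤ ·)).map (etaGen W n)).prod

/-- The submatrix `ω_I` of `ω` with rows and columns indexed by `I` (in increasing order). -/
def Matrix.subByFinset {A : Type*} {n : ℕ} (ω : Matrix (Fin n) (Fin n) A)
    (I : Finset (Fin n)) : Matrix (Fin I.card) (Fin I.card) A :=
  fun a b => ω (I.orderIsoOfFin rfl a) (I.orderIsoOfFin rfl b)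

set_option linter.unusedSectionVars false
set_option linter.unusedVariables false

open ExteriorAlgebra in
lemma commute_of_mem_evenPart {V : Type*} [AddCommGroup V] [Module ℂ V]
    {x : ExteriorAlgebra ℂ V} (hx : x ∈ evenPart V) (y : ExteriorAlgebra ℂ V) :
    Commute x y := by
  have hanti : ∀ u v : V, ι ℂ u * ι ℂ v = -(ι ℂ v * ι ℂ u) := fun u v => by
    rw [eq_neg_iff_add_eq_zero]; exact ι_add_mul_swap u v
  have key : ∀ (a b : V) (y : ExteriorAlgebra ℂ V), Commute (ι ℂ a * ι ℂ b) y := by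
    intro a b y
    induction y using ExteriorAlgebra.induction with
    | algebraMap r => exact (Algebra.commutes r _).symm
    | ι c =>
        show (ι ℂ a * ι ℂ b) * ι ℂ c = ι ℂ c * (ι ℂ a * ι ℂ b)
        rw [mul_assoc, hanti b c, mul_neg, ← mul_assoc, hanti a c, neg_mul, neg_neg, mul_assoc]
    | mul y z hy hz => exact hy.mul_right hz
    | add y z hy hz => exact hy.add_right hz
  revert y
  refine Submodule.iSup_induction (x := x)
    (fun i : ℕ => (LinearMap.range (ι ℂ (M := V))) ^ (2 * i)) hx ?_ ?_ ?_
  · intro i x hx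
    simp only [pow_mul] at hx
    refine Submodule.pow_induction_on_left' (R := ℂ) (M := LinearMap.range (ι ℂ (M := V)) ^ 2) (C := fun _ z _ => ∀ y, Commute z y)
      (hx := hx) ?_ ?_ ?_
    · intro r y; exact Algebra.commutes r y
    · intro u v i hu hv hcu hcv y; exact (hcu y).add_left (hcv y)
    · intro m hm i z hz hcz y
      rw [pow_two] at hm
      have hcm : ∀ y, Commute m y := by
        refine Submodule.mul_induction_on hm ?_ ?_
        · rintro _ ⟨a, rfl⟩ _ ⟨b, rfl⟩; exact key a b
        · intro u v hu hv y; exact (hu y).add_left (hv y)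
      exact (hcm y).mul_left (hcz y)
  · intro y; exact Commute.zero_left y
  · intro u v hu hv y; exact (hu y).add_left (hv y)
section PowExpand
variable {R : Type*} [Ring R] {X : Type*} [Fintype X] [DecidableEq X]

/-- ordered product of `w`-entries along consecutive pairs of `g`. -/
def Wprod (w : X → X → R) (k : ℕ) (g : Fin (2*k) → X) : R :=
  (List.ofFn fun l : Fin k => w (g ⟨2*l.val, by have := l.isLt; omega⟩)
    (g ⟨2*l.val+1, by have := l.isLt; omega⟩)).prod

/-- ordered product of `e`-entries along `g`. -/
def Eprod (e : X → R) (k : ℕ) (g : Fin (2*k) → X) : R :=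
  (List.ofFn fun a => e (g a)).prod

lemma sum_pi_fin_succ {M : Type*} [AddCommMonoid M] {r : ℕ} (F : (Fin (r+1) → X) → M) :
    ∑ g : Fin (r+1) → X, F g = ∑ x : X, ∑ g : Fin r → X, F (Fin.cons x g) := by
  rw [← Equiv.sum_comp (Fin.consEquiv (fun _ : Fin (r+1) => X)) F, Fintype.sum_prod_type]
  rfl

lemma cons2_zero {k : ℕ} (i j : X) (g : Fin (2*k) → X) (h : 0 < 2*k+2) :
    (Fin.cons i (Fin.cons j g) : Fin (2*k+2) → X) ⟨0, h⟩ = i := by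
  exact Fin.cons_zero _ _

lemma cons2_one {k : ℕ} (i j : X) (g : Fin (2*k) → X) (h : 1 < 2*k+2) :
    (Fin.cons i (Fin.cons j g) : Fin (2*k+2) → X) ⟨1, h⟩ = j := by
  have : (⟨1, h⟩ : Fin (2*k+2)) = Fin.succ ⟨0, by omega⟩ := rfl
  rw [this, Fin.cons_succ]; exact Fin.cons_zero _ _

lemma cons2_add2 {k : ℕ} (i j : X) (g : Fin (2*k) → X) (b : ℕ) (hb : b < 2*k)
    (h : b+2 < 2*k+2) :
    (Fin.cons i (Fin.cons j g) : Fin (2*k+2) → X) ⟨b+2, h⟩ = g ⟨b, hb⟩ := by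
  have e1 : (⟨b+2, h⟩ : Fin (2*k+2)) = Fin.succ ⟨b+1, by omega⟩ := rfl
  have e2 : (⟨b+1, by omega⟩ : Fin (2*k+1)) = Fin.succ ⟨b, hb⟩ := rfl
  rw [e1, Fin.cons_succ, e2, Fin.cons_succ]

lemma Wprod_cons2 (w : X → X → R) {k : ℕ} (i j : X) (g : Fin (2*k) → X) :
    Wprod w (k+1) (Fin.cons i (Fin.cons j g) : Fin (2*k+2) → X) = w i j * Wprod w k g := by
  unfold Wprod
  rw [List.ofFn_succ, List.prod_cons]
  rfl

lemma Eprod_cons2 (e : X → R) {k : ℕ} (i j : X) (g : Fin (2*k) → X) :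
    Eprod e (k+1) (Fin.cons i (Fin.cons j g) : Fin (2*k+2) → X)
      = e i * (e j * Eprod e k g) := by
  unfold Eprod
  rw [List.ofFn_succ, List.prod_cons, List.ofFn_succ, List.prod_cons]
  rfl

lemma central_rearrange {S : Type*} [Ring S] (a x y b u : S)
    (ha : ∀ z, Commute a z) (hb : ∀ z, Commute b z) :
    (a * x * y) * (b * u) = (a * b) * (x * (y * u)) := by
  rw [mul_assoc a x y, mul_assoc a (x*y) (b*u), ← mul_assoc (x*y) b u,
    ((hb (x*y)).symm).eq, mul_assoc b (x*y) u, ← mul_assoc a b ((x*y)*u), mul_assoc x y u]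

lemma pow_expand (w : X → X → R) (e : X → R) (hw : ∀ i j y, Commute (w i j) y) (k : ℕ) :
    (∑ i : X, ∑ j : X, w i j * e i * e j) ^ k
      = ∑ g : Fin (2*k) → X, Wprod w k g * Eprod e k g := by
  induction k with
  | zero =>
      simp [Wprod, Eprod]
  | succ k ih =>
      have hWp : ∀ (g : Fin (2*k) → X) (z : R), Commute (Wprod w k g) z := by
        intro g z
        refine Commute.list_prod_left _ _ ?_
        intro x hx
        obtain ⟨l, rfl⟩ := List.mem_ofFn.mp hx
        exact hw _ _ z
      rw [pow_succ', ih]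
      show (∑ i : X, ∑ j : X, w i j * e i * e j) * (∑ g : Fin (2*k) → X, Wprod w k g * Eprod e k g)
        = ∑ g : Fin (2*k+2) → X, Wprod w (k+1) g * Eprod e (k+1) g
      simp only [sum_pi_fin_succ]
      simp only [Wprod_cons2, Eprod_cons2]
      conv_lhs => rw [Finset.sum_mul]
      refine Finset.sum_congr rfl fun i _ => ?_
      conv_lhs => rw [Finset.sum_mul]
      refine Finset.sum_congr rfl fun j _ => ?_
      conv_lhs => rw [Finset.mul_sum]
      refine Finset.sum_congr rfl fun g _ => ?_
      exact central_rearrange _ _ _ _ _ (fun z => hw i j z) (fun z => hWp g z)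
end PowExpand
section Glue
open ExteriorAlgebra
variable {W : Type*} [AddCommGroup W] [Module ℂ W] {n : ℕ}

lemma inclW_mem_evenPart {x : ExteriorAlgebra ℂ W} (hx : x ∈ evenPart W) :
    inclW W n x ∈ evenPart (W × (Fin n → ℂ)) := by
  refine Submodule.iSup_induction (x := x)
    (fun i : ℕ => (LinearMap.range (ι ℂ (M := W))) ^ (2 * i)) hx ?_ ?_ ?_
  · intro i x hx
    have h1 : inclW W n x ∈
        Submodule.map (inclW W n).toLinearMap ((LinearMap.range (ι ℂ (M := W))) ^ (2*i)) :=
      Submodule.mem_map_of_mem hx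
    rw [Submodule.map_pow] at h1
    have h2 : Submodule.map (inclW W n).toLinearMap (LinearMap.range (ι ℂ (M := W)))
        ≤ LinearMap.range (ι ℂ (M := W × (Fin n → ℂ))) := by
      rintro _ ⟨_, ⟨v, rfl⟩, rfl⟩
      exact ⟨LinearMap.inl ℂ W (Fin n → ℂ) v, (map_apply_ι _ v).symm⟩
    have h3 := pow_le_pow_left' h2 (2*i) h1
    exact Submodule.mem_iSup_of_mem i h3
  · simp
  · intro u v hu hv; rw [map_add]; exact add_mem hu hv

lemma commute_inclW (x : ExteriorAlgebra ℂ W) (hx : x ∈ evenPart W)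
    (y : ExteriorAlgebra ℂ (W × (Fin n → ℂ))) : Commute (inclW W n x) y :=
  commute_of_mem_evenPart (inclW_mem_evenPart hx) y

/-- the vector generating `etaGen`. -/
def eVec (n : ℕ) (i : Fin n) : W × (Fin n → ℂ) := ((0 : W), Pi.single i (1 : ℂ))

lemma Eprod_eq_iotaMulti (k : ℕ) (g : Fin (2*k) → Fin n) :
    Eprod (etaGen W n) k g = ExteriorAlgebra.ιMulti ℂ (2*k) (fun a => eVec (W := W) n (g a)) := by
  rw [ExteriorAlgebra.ιMulti_apply]; rfl

lemma Eprod_eq_zero_of_not_injective (k : ℕ) (g : Fin (2*k) → Fin n)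
    (hg : ¬ Function.Injective g) : Eprod (etaGen W n) k g = 0 := by
  rw [Eprod_eq_iotaMulti]
  rw [Function.Injective] at hg
  push_neg at hg
  obtain ⟨a, b, hab, hne⟩ := hg
  refine AlternatingMap.map_eq_zero_of_eq _ _ ?_ hne
  simp [eVec, hab]

lemma Eprod_comp_perm (k : ℕ) (g : Fin (2*k) → Fin n) (σ : Equiv.Perm (Fin (2*k))) :
    Eprod (etaGen W n) k (fun a => g (σ a)) = Equiv.Perm.sign σ • Eprod (etaGen W n) k g := by
  rw [Eprod_eq_iotaMulti, Eprod_eq_iotaMulti]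
  exact AlternatingMap.map_perm
    (g := ExteriorAlgebra.ιMulti (M := W × (Fin n → ℂ)) ℂ (2*k))
    (fun a => eVec (W := W) n (g a)) σ

end Glue
section PerSubset
open ExteriorAlgebra
variable {W : Type*} [AddCommGroup W] [Module ℂ W] {n : ℕ}

lemma sort_eq_ofFn {k : ℕ} (I : Finset (Fin n)) (hI : I.card = 2*k) :
    I.sort (· ≤ ·) = List.ofFn (fun a : Fin (2*k) => I.orderEmbOfFin hI a) := by
  apply List.ext_getElem
  · simp [Finset.length_sort, hI]
  · intro t h1 h2
    rw [List.getElem_ofFn, Finset.orderEmbOfFin_apply]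
    rfl

lemma Eprod_orderEmb {k : ℕ} (I : Finset (Fin n)) (hI : I.card = 2*k) :
    Eprod (etaGen W n) k (fun a => I.orderEmbOfFin hI a) = etaMonomial W n I := by
  unfold Eprod etaMonomial
  rw [sort_eq_ofFn I hI, List.map_ofFn]
  rfl

lemma orderIso_cast_eq {k : ℕ} (I : Finset (Fin n)) (hI : I.card = 2*k)
    (x : Fin I.card) (y : Fin (2*k)) (hxy : x.val = y.val) :
    ((I.orderIsoOfFin rfl x : Fin n)) = I.orderEmbOfFin hI y := by
  obtain ⟨xv, hx⟩ := x
  obtain ⟨yv, hy⟩ := y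
  simp only at hxy
  subst hxy
  rw [Finset.coe_orderIsoOfFin_apply, Finset.orderEmbOfFin_apply, Finset.orderEmbOfFin_apply]
  rfl

lemma algHom_smul {R A B : Type*} [CommSemiring R] [Semiring A] [Semiring B] [Algebra R A]
    [Algebra R B] (f : A →ₐ[R] B) (c : R) (x : A) : f (c • x) = c • f x := by
  rw [Algebra.smul_def, _root_.map_mul, AlgHom.commutes, ← Algebra.smul_def]

lemma pfaffian_expand {k : ℕ} (ω : Matrix (Fin n) (Fin n) (ExteriorAlgebra ℂ W))
    (I : Finset (Fin n)) (hI : I.card = 2*k) :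
    inclW W n (pfaffian (ω.subByFinset I))
      = ((2 ^ k * (Nat.factorial k) : ℂ))⁻¹ •
          ∑ σ : Equiv.Perm (Fin (2*k)),
            ((Equiv.Perm.sign σ : ℤ) : ℂ) •
              Wprod (fun i j => inclW W n (ω i j)) k
                (fun a => I.orderEmbOfFin hI (σ a)) := by
  have hd : I.card / 2 = k := by omega
  unfold pfaffian
  rw [algHom_smul, map_sum]
  have hcast : ((2 ^ (I.card / 2) * (Nat.factorial (I.card / 2)) : ℂ)) = 2 ^ k * k.factorial := by
    rw [hd]
  rw [hcast]
  congr 1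
  -- reindex permutations
  have ec : Fin I.card ≃ Fin (2*k) := finCongr hI
  rw [← Equiv.sum_comp (Equiv.permCongr (finCongr hI)).symm]
  refine Finset.sum_congr rfl fun σ _ => ?_
  have hsign : Equiv.Perm.sign ((finCongr hI).permCongr.symm σ) = Equiv.Perm.sign σ := by
    rw [Equiv.permCongr_symm, Equiv.Perm.sign_permCongr]
  rw [Int.cast_smul_eq_zsmul, Int.cast_smul_eq_zsmul, map_zsmul, hsign]
  congr 1
  rw [← List.ofFn_eq_map, map_list_prod]
  rw [List.map_ofFn]
  rw [List.ofFn_congr hd]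
  unfold Wprod
  congr 1

end PerSubset
section Bij
open ExteriorAlgebra
variable {W : Type*} [AddCommGroup W] [Module ℂ W] {n : ℕ}

lemma image_orderEmb_comp {k : ℕ} (I : Finset (Fin n)) (hI : I.card = 2*k)
    (σ : Equiv.Perm (Fin (2*k))) :
    Finset.image (fun a => I.orderEmbOfFin hI (σ a)) Finset.univ = I := by
  apply Finset.eq_of_subset_of_card_le
  · intro x hx
    simp only [Finset.mem_image] at hx
    obtain ⟨a, _, rfl⟩ := hx
    exact Finset.orderEmbOfFin_mem I hI _
  · have : (Finset.image (fun a => I.orderEmbOfFin hI (σ a)) Finset.univ).card = 2*k := by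
      have hinj : Function.Injective (fun a => I.orderEmbOfFin hI (σ a)) :=
        fun a b hab => σ.injective ((I.orderEmbOfFin hI).injective hab)
      rw [Finset.card_image_of_injective _ hinj, Finset.card_univ, Fintype.card_fin]
    rw [this, hI]

lemma sum_g_eq (w : Fin n → Fin n → ExteriorAlgebra ℂ (W × (Fin n → ℂ))) (k : ℕ) :
    ∑ g : Fin (2*k) → Fin n, Wprod w k g * Eprod (etaGen W n) k g
      = ∑ I ∈ Finset.univ.filter (fun I : Finset (Fin n) => I.card = 2*k),
          ∑ σ : Equiv.Perm (Fin (2*k)),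
            (if h : I.card = 2*k then
              Wprod w k (fun a => I.orderEmbOfFin h (σ a))
                * Eprod (etaGen W n) k (fun a => I.orderEmbOfFin h (σ a))
            else 0) := by
  classical
  rw [← Finset.sum_filter_add_sum_filter_not Finset.univ
    (fun g : Fin (2*k) → Fin n => Function.Injective g)]
  have h2 : ∑ g ∈ Finset.univ.filter
      (fun g : Fin (2*k) → Fin n => ¬ Function.Injective g),
      Wprod w k g * Eprod (etaGen W n) k g = 0 := by
    refine Finset.sum_eq_zero fun g hg => ?_
    rw [Eprod_eq_zero_of_not_injective _ _ (Finset.mem_filter.mp hg).2, mul_zero]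
  rw [h2, add_zero, ← Finset.sum_product']
  refine (Finset.sum_bij
    (fun (p : Finset (Fin n) × Equiv.Perm (Fin (2*k)))
        (hp : p ∈ (Finset.univ.filter (fun I : Finset (Fin n) => I.card = 2*k)) ×ˢ
          (Finset.univ : Finset (Equiv.Perm (Fin (2*k))))) =>
      fun a => p.1.orderEmbOfFin (Finset.mem_filter.mp (Finset.mem_product.mp hp).1).2 (p.2 a))
    ?_ ?_ ?_ ?_).symm
  · intro p hp
    refine Finset.mem_filter.mpr ⟨Finset.mem_univ _, ?_⟩
    exact (p.1.orderEmbOfFin _).injective.comp p.2.injective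
  · rintro ⟨I1, σ1⟩ hp ⟨I2, σ2⟩ hq h
    have hI1 : I1.card = 2*k := (Finset.mem_filter.mp (Finset.mem_product.mp hp).1).2
    have hI2 : I2.card = 2*k := (Finset.mem_filter.mp (Finset.mem_product.mp hq).1).2
    have h1 : I1 = I2 := by
      have := congrArg (fun g => Finset.image g Finset.univ) h
      simpa only [image_orderEmb_comp] using this
    subst h1
    have h2 : σ1 = σ2 := by
      apply Equiv.ext
      intro a
      have := congrFun h a
      exact (I1.orderEmbOfFin hI1).injective this
    rw [h2]
  · intro g hg
    have hginj : Function.Injective g := (Finset.mem_filter.mp hg).2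
    set I : Finset (Fin n) := Finset.image g Finset.univ with hIdef
    have hI : I.card = 2*k := by
      rw [hIdef, Finset.card_image_of_injective _ hginj, Finset.card_univ, Fintype.card_fin]
    have hmemI : ∀ a, g a ∈ I := fun a => Finset.mem_image_of_mem g (Finset.mem_univ a)
    set u : Fin (2*k) → Fin (2*k) := fun a => (I.orderIsoOfFin hI).symm ⟨g a, hmemI a⟩ with hu
    have huinj : Function.Injective u := by
      intro a b hab
      apply hginj
      have h1 : ∀ c, (((I.orderIsoOfFin hI) (u c)) : Fin n) = g c := by
        intro c; rw [hu]; simp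
      have h2 := congrArg (fun z => (((I.orderIsoOfFin hI) z) : Fin n)) hab
      rw [h1, h1] at h2
      exact h2
    obtain ⟨σ, hσ⟩ : ∃ σ : Equiv.Perm (Fin (2*k)), ⇑σ = u :=
      ⟨Equiv.ofBijective u (Finite.injective_iff_bijective.mp huinj), rfl⟩
    refine ⟨⟨I, σ⟩, Finset.mem_product.mpr ⟨Finset.mem_filter.mpr ⟨Finset.mem_univ _, hI⟩,
      Finset.mem_univ _⟩, ?_⟩
    funext a
    show I.orderEmbOfFin _ (σ a) = g a
    rw [hσ, hu]
    rw [← Finset.coe_orderIsoOfFin_apply]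
    simp
  · rintro ⟨I1, σ1⟩ hp
    have hI1 : I1.card = 2*k := (Finset.mem_filter.mp (Finset.mem_product.mp hp).1).2
    rw [dif_pos hI1]

end Bij
section FinalAssembly
open ExteriorAlgebra

lemma filter_even_partition {n m : ℕ} (hn : n = 2*m) :
    Finset.univ.filter (fun I : Finset (Fin n) => Even I.card)
      = (Finset.range (m+1)).biUnion
          (fun k => Finset.univ.filter (fun I : Finset (Fin n) => I.card = 2*k)) := by
  ext I
  simp only [Finset.mem_filter, Finset.mem_biUnion, Finset.mem_range, Finset.mem_univ, true_and]
  have hle : I.card ≤ n := by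
    have := Finset.card_le_univ I
    simpa [Finset.card_univ] using this
  constructor
  · rintro ⟨r, hr⟩
    exact ⟨r, by omega, by omega⟩
  · rintro ⟨r, h1, h2⟩
    exact ⟨r, by omega⟩

end FinalAssembly

/-- **Gaussian expansion into Pfaffians, with even coefficients.** For `n = 2m` and a
skew-symmetric `n × n` matrix `ω` with entries even elements of `Λ(W)`, in `Λ(W ⊕ ℂⁿ)`
one has `exp((1/2) Σ_{i,j} ω_{ij} η_i η_j) = Σ_{I even} Pf(ω_I) η^I`, the exponential
being a finite sum. -/
theorem exp_eq_sum_pfaffian_even_coeffs (m : ℕ) (hn : n = 2 * m)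
    (ω : Matrix (Fin n) (Fin n) (ExteriorAlgebra ℂ W))
    (heven : ∀ i j, ω i j ∈ evenPart W) (hskew : ωᵀ = -ω) :
    ∑ k ∈ Finset.range (m + 1),
        ((Nat.factorial k : ℂ))⁻¹ •
          (((1 : ℂ) / 2) •
              ∑ i : Fin n, ∑ j : Fin n,
                inclW W n (ω i j) * etaGen W n i * etaGen W n j) ^ k
      = ∑ I ∈ Finset.univ.filter (fun I : Finset (Fin n) => Even I.card),
          inclW W n (pfaffian (ω.subByFinset I)) * etaMonomial W n I := by
  classical
  have hwc : ∀ (i j : Fin n) (y : ExteriorAlgebra ℂ (W × (Fin n → ℂ))),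
      Commute (inclW W n (ω i j)) y :=
    fun i j y => commute_inclW _ (heven i j) y
  have step1 : ∀ k : ℕ,
      ((Nat.factorial k : ℂ))⁻¹ • (((1:ℂ)/2) • ∑ i : Fin n, ∑ j : Fin n,
          inclW W n (ω i j) * etaGen W n i * etaGen W n j) ^ k
      = ((2^k * (Nat.factorial k) : ℂ))⁻¹ •
          ∑ I ∈ Finset.univ.filter (fun I : Finset (Fin n) => I.card = 2*k),
            ∑ σ : Equiv.Perm (Fin (2*k)),
              (if h : I.card = 2*k then
                Wprod (fun i j => inclW W n (ω i j)) k (fun a => I.orderEmbOfFin h (σ a))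
                  * Eprod (etaGen W n) k (fun a => I.orderEmbOfFin h (σ a))
              else 0) := by
    intro k
    rw [smul_pow, pow_expand (fun i j => inclW W n (ω i j)) (etaGen W n) hwc k,
      sum_g_eq, smul_smul]
    congr 1
    rw [one_div, inv_pow, mul_inv, mul_comm]
  simp only [step1]
  have hdisj : (↑(Finset.range (m+1)) : Set ℕ).PairwiseDisjoint
      (fun k => Finset.univ.filter (fun I : Finset (Fin n) => I.card = 2*k)) := by
    intro a _ b _ hab
    refine Finset.disjoint_left.mpr fun I hIa hIb => ?_
    have h1 := (Finset.mem_filter.mp hIa).2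
    have h2 := (Finset.mem_filter.mp hIb).2
    exact hab (by omega)
  rw [filter_even_partition hn, Finset.sum_biUnion hdisj]
  refine Finset.sum_congr rfl fun k hk => ?_
  rw [Finset.smul_sum]
  refine Finset.sum_congr rfl fun I hIf => ?_
  have hI : I.card = 2*k := (Finset.mem_filter.mp hIf).2
  rw [pfaffian_expand ω I hI, smul_mul_assoc, Finset.sum_mul]
  congr 1
  refine Finset.sum_congr rfl fun σ _ => ?_
  rw [dif_pos hI]
  have hE := Eprod_comp_perm (W := W) k (fun a => I.orderEmbOfFin hI a) σ
  rw [hE, Eprod_orderEmb I hI, smul_mul_assoc, Units.smul_def, mul_smul_comm,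
    Int.cast_smul_eq_zsmul ℂ]
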